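/- arXiv:math/0512117 — 6 statements merged into one kernel-verified Lean document; each statement's English description precedes it below -/
import Mathlib

section
/- The special linear group SL(2,ℤ) is isomorphic to the presented group ⟨x, y | x³ = y², x⁶ = 1⟩; explicitly, there is a group isomorphism from the presented group on two generators x, y with relations x³y⁻² and x⁶ to SL(2,ℤ) sending x to the matrix [[0,−1],[1,1]] and y to the matrix [[0,−1],[1,0]]. -/
/-!
The homomorphism from G = ⟨x, y | x³ = y², x⁶ = 1⟩ sending x ↦ ST and y ↦ S is well defined since
(ST)³ = S² = -1, and it is onto because S and T generate SL(2,ℤ). For injectivity, z = x³ = y² is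
central with z² = 1 and image -1 ≠ 1, so it suffices that G/⟨z⟩ acts faithfully on the upper half
plane ℍ (on which -1 acts trivially). G/⟨z⟩ is generated by the images of x and y, of orders
dividing 3 and 2, so it is a quotient of ℤ/3 ∗ ℤ/2, and this free product acts faithfully by
ping-pong: y acts by w ↦ -1/w, mapping {Re < 0} into {Re > 0}, while x acts by w ↦ -1/(w+1), and
both x and x² map {Re > 0} into {Re < 0}.
-/

open Function Matrix MatrixGroups ModularGroup UpperHalfPlane Pointwise Subgroup

section ZModLift

variable {K : Type*} [Group K] {n : ℕ}

def zmodLift (g : K) (hg : g ^ n = 1) : Multiplicative (ZMod n) →* K :=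
  AddMonoidHom.toMultiplicativeLeft <| ZMod.lift n
    ⟨zmultiplesHom (Additive K) (Additive.ofMul g), by simp [← ofMul_pow, hg]⟩

lemma zmodLift_ofAdd_intCast (g : K) (hg : g ^ n = 1) (k : ℤ) :
    zmodLift g hg (Multiplicative.ofAdd (k : ZMod n)) = g ^ k := by
  simp [zmodLift, ZMod.lift_coe]

end ZModLift

lemma Subgroup.normal_zpowers_of_mem_center {G : Type*} [Group G] {z : G} (hz : z ∈ center G) :
    (zpowers z).Normal :=
  ⟨fun _ hn g => by rwa [mem_center_iff.mp (zpowers_le.mpr hz hn) g, mul_inv_cancel_right]⟩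

lemma Subgroup.eq_one_or_eq_of_mem_zpowers_of_sq_eq_one {G : Type*} [Group G] {z g : G}
    (hz : z ^ 2 = 1) (hg : g ∈ zpowers z) : g = 1 ∨ g = z := by
  obtain ⟨k, rfl⟩ := mem_zpowers_iff.mp hg
  rcases Int.even_or_odd' k with ⟨m, rfl | rfl⟩
  · simp [_root_.zpow_mul, hz]
  · simp [_root_.zpow_add, _root_.zpow_mul, hz]

lemma PresentedGroup.mem_center_of_forall_commute {α : Type*} {rels : Set (FreeGroup α)}
    {z : PresentedGroup rels} (h : ∀ a, Commute (PresentedGroup.of a) z) :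
    z ∈ center (PresentedGroup rels) := by
  refine mem_center_iff.mpr fun g => mem_centralizer_singleton_iff.mp ?_
  exact PresentedGroup.generated_by rels _ (fun a => mem_centralizer_singleton_iff.mpr (h a)) g

namespace ModularGroup

lemma S_sq : S ^ 2 = -1 := by
  ext i j; fin_cases i <;> fin_cases j <;> rfl

lemma S_mul_T_pow_three : (S * T) ^ 3 = -1 := by
  ext i j; fin_cases i <;> fin_cases j <;> rfl

end ModularGroup

namespace UpperHalfPlane

lemma re_S_smul (w : ℍ) : (S • w).re = -w.re / Complex.normSq w := by
  rw [modular_S_smul, re, coe_mk, Complex.inv_re, Complex.normSq_neg, Complex.neg_re]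
  rfl

lemma re_S_smul_pos {w : ℍ} (hw : w.re < 0) : 0 < (S • w).re := by
  rw [re_S_smul]
  exact div_pos (neg_pos.mpr hw) w.normSq_pos

lemma re_S_smul_neg {w : ℍ} (hw : 0 < w.re) : (S • w).re < 0 := by
  rw [re_S_smul]
  exact div_neg_of_neg_of_pos (neg_neg_iff_pos.mpr hw) w.normSq_pos

lemma neg_one_lt_re_S_smul {w : ℍ} (hw : 1 < w.re) : -1 < (S • w).re := by
  rw [re_S_smul, lt_div_iff₀ w.normSq_pos]
  have hre : w.re * w.re ≤ Complex.normSq w := Complex.re_sq_le_normSq w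
  nlinarith

lemma re_S_mul_T_smul_neg {w : ℍ} (hw : -1 < w.re) : ((S * T) • w).re < 0 := by
  rw [mul_smul]
  exact re_S_smul_neg (by rw [re_T_smul]; linarith)

lemma neg_one_lt_re_S_mul_T_smul {w : ℍ} (hw : 0 < w.re) : -1 < ((S * T) • w).re := by
  rw [mul_smul]
  exact neg_one_lt_re_S_smul (by rw [re_T_smul]; linarith)

end UpperHalfPlane

namespace SL2ZPresentation

open PresentedGroup

abbrev rels : Set (FreeGroup (Fin 2)) :=
  {FreeGroup.of 0 ^ 3 * (FreeGroup.of 1)⁻¹ ^ 2, FreeGroup.of 0 ^ 6}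

abbrev G := PresentedGroup rels

def gen : Fin 2 → SL(2, ℤ) := ![S * T, S]

lemma lift_gen_rels : ∀ r ∈ rels, FreeGroup.lift gen r = 1 := by
  rintro r (rfl | rfl)
  · simp [gen, S_mul_T_pow_three, S_sq]
  · rw [map_pow, FreeGroup.lift_apply_of, show 6 = 3 * 2 from rfl, pow_mul]
    simp [gen, S_mul_T_pow_three]

def toSL : G →* SL(2, ℤ) := toGroup lift_gen_rels

lemma toSL_of (i : Fin 2) : toSL (of i) = gen i := toGroup.of lift_gen_rels

lemma toSL_surjective : Surjective toSL := by
  have hS : S ∈ toSL.range := ⟨of 1, toSL_of 1⟩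
  have hT : T ∈ toSL.range := ⟨(of 1)⁻¹ * of 0, by simp [toSL_of, gen]⟩
  rw [← MonoidHom.range_eq_top, eq_top_iff, ← SpecialLinearGroup.SL2Z_generators, closure_le]
  rintro _ (rfl | rfl)
  exacts [hS, hT]

def z : G := of 0 ^ 3

lemma of_one_sq : of 1 ^ 2 = z := by
  have h := one_of_mem (rels := rels) (Set.mem_insert _ _)
  simp only [map_mul, map_pow, map_inv, inv_pow] at h
  exact (mul_inv_eq_one.mp h).symm

lemma z_sq : z ^ 2 = 1 := by
  have h := one_of_mem (rels := rels) (Set.mem_insert_of_mem _ rfl)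
  rw [map_pow] at h
  rwa [z, ← pow_mul]

lemma z_mem_center : z ∈ center G := by
  refine mem_center_of_forall_commute fun i => ?_
  fin_cases i
  · exact (Commute.refl _).pow_right 3
  · rw [← of_one_sq]
    exact (Commute.refl _).pow_right 2

lemma toSL_z : toSL z = -1 := by
  rw [z, map_pow, toSL_of]
  exact S_mul_T_pow_three

instance : (zpowers z).Normal := normal_zpowers_of_mem_center z_mem_center

noncomputable def quotAction : G ⧸ zpowers z →* Equiv.Perm ℍ :=
  QuotientGroup.lift _ ((MulAction.toPermHom SL(2, ℤ) ℍ).comp toSL) <| zpowers_le.mpr <| by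
    ext w
    simp [toSL_z]

/-- The cyclic factors `ℤ/3` and `ℤ/2`, indexed like the generators `x` and `y`. -/
abbrev Factor (i : Fin 2) : Type := Multiplicative (ZMod (![3, 2] i))

instance (i : Fin 2) : NeZero (![3, 2] i) := ⟨by fin_cases i <;> decide⟩

lemma mk_of_pow_eq_one (i : Fin 2) :
    (QuotientGroup.mk (of i) : G ⧸ zpowers z) ^ (![3, 2] i) = 1 := by
  rw [← QuotientGroup.mk_pow, QuotientGroup.eq_one_iff]
  fin_cases i
  · exact mem_zpowers z
  · simp [of_one_sq]

noncomputable def factorHom (i : Fin 2) : Factor i →* G ⧸ zpowers z :=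
  zmodLift _ (mk_of_pow_eq_one i)

lemma quotAction_factorHom_smul (i : Fin 2) (k : ℤ) (w : ℍ) :
    quotAction (factorHom i (Multiplicative.ofAdd k)) • w = gen i ^ k • w := by
  simp [factorHom, zmodLift_ofAdd_intCast, quotAction, ← QuotientGroup.mk_zpow, toSL_of]

lemma lift_factorHom_surjective : Surjective (Monoid.CoprodI.lift factorHom) := by
  intro x
  obtain ⟨g, rfl⟩ := QuotientGroup.mk_surjective x
  refine generated_by rels ((Monoid.CoprodI.lift factorHom).range.comap (QuotientGroup.mk' _))
    (fun i => ⟨Monoid.CoprodI.of (i := i) (.ofAdd ((1 : ℤ) : ZMod _)), ?_⟩) g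
  rw [Monoid.CoprodI.lift_of, factorHom, zmodLift_ofAdd_intCast, zpow_one]
  rfl

def halfPlane : Fin 2 → Set ℍ := ![{w | w.re < 0}, {w | 0 < w.re}]

lemma nonempty_halfPlane (i : Fin 2) : (halfPlane i).Nonempty := by
  fin_cases i
  · exact ⟨T⁻¹ • I, show (T⁻¹ • I).re < 0 by rw [re_T_inv_smul, I_re]; norm_num⟩
  · exact ⟨T • I, show 0 < (T • I).re by rw [re_T_smul, I_re]; norm_num⟩

lemma pairwise_disjoint_halfPlane : Pairwise (Disjoint on halfPlane) := by
  intro i j hij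
  fin_cases i <;> fin_cases j
  · exact absurd rfl hij
  · exact Set.disjoint_left.mpr fun w (h1 : w.re < 0) (h2 : 0 < w.re) => h1.not_gt h2
  · exact Set.disjoint_left.mpr fun w (h1 : 0 < w.re) (h2 : w.re < 0) => h1.not_gt h2
  · exact absurd rfl hij

lemma factor_smul_halfPlane_subset :
    Pairwise fun i j => ∀ h : Factor i, h ≠ 1 →
      (quotAction.comp (factorHom i)) h • halfPlane j ⊆ halfPlane i := by
  have hZ3 : ∀ h : Factor 0, h ≠ 1 → h = .ofAdd (1 : ℤ) ∨ h = .ofAdd (2 : ℤ) := by decide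
  have hZ2 : ∀ h : Factor 1, h ≠ 1 → h = .ofAdd (1 : ℤ) := by decide
  intro i j hij h hh
  rw [Set.smul_set_subset_iff]
  fin_cases i <;> fin_cases j
  · exact absurd rfl hij
  · intro w (hw : 0 < w.re)
    show ((quotAction.comp (factorHom 0)) h • w).re < 0
    obtain rfl | rfl := hZ3 h hh
    · rw [MonoidHom.comp_apply, quotAction_factorHom_smul, zpow_one]
      exact re_S_mul_T_smul_neg (by linarith)
    · rw [MonoidHom.comp_apply, quotAction_factorHom_smul, _root_.zpow_two, mul_smul]
      exact re_S_mul_T_smul_neg (neg_one_lt_re_S_mul_T_smul hw)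
  · intro w (hw : w.re < 0)
    show 0 < ((quotAction.comp (factorHom 1)) h • w).re
    obtain rfl := hZ2 h hh
    rw [MonoidHom.comp_apply, quotAction_factorHom_smul, zpow_one]
    exact re_S_smul_pos hw
  · exact absurd rfl hij

lemma quotAction_comp_lift_factorHom_injective :
    Injective (quotAction.comp (Monoid.CoprodI.lift factorHom)) := by
  have hlift : quotAction.comp (Monoid.CoprodI.lift factorHom) =
      Monoid.CoprodI.lift fun i => quotAction.comp (factorHom i) :=
    Monoid.CoprodI.ext_hom _ _ fun i => by ext; simp
  have hcard : 3 ≤ Cardinal.mk (Multiplicative (ZMod 3)) := by simp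
  rw [hlift]
  exact Monoid.CoprodI.lift_injective_of_ping_pong _ (Or.inr ⟨0, hcard⟩) halfPlane
    nonempty_halfPlane pairwise_disjoint_halfPlane factor_smul_halfPlane_subset

lemma quotAction_injective : Injective quotAction :=
  Injective.of_comp_right (g := Monoid.CoprodI.lift factorHom)
    quotAction_comp_lift_factorHom_injective lift_factorHom_surjective

lemma toSL_injective : Injective toSL := by
  refine (injective_iff_map_eq_one _).mpr fun g hg => ?_
  have hmk : (g : G ⧸ zpowers z) = 1 := quotAction_injective (by ext; simp [quotAction, hg])
  obtain rfl | rfl :=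
    eq_one_or_eq_of_mem_zpowers_of_sq_eq_one z_sq ((QuotientGroup.eq_one_iff g).mp hmk)
  · rfl
  · rw [toSL_z] at hg
    simpa using congrArg (fun A : SL(2, ℤ) => A 0 0) hg

lemma toSL_bijective : Bijective toSL := ⟨toSL_injective, toSL_surjective⟩

end SL2ZPresentation

/-- SL(2,ℤ) is isomorphic to the presented group ⟨x, y | x³ = y², x⁶ = 1⟩,
via x ↦ [[0,−1],[1,1]] and y ↦ [[0,−1],[1,0]]. -/
theorem sl2z_presentation :
    ∃ e : PresentedGroup
        ({FreeGroup.of 0 ^ 3 * (FreeGroup.of 1)⁻¹ ^ 2, FreeGroup.of 0 ^ 6} :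
          Set (FreeGroup (Fin 2))) ≃* SL(2, ℤ),
      e (PresentedGroup.of 0) =
        ⟨!![0, -1; 1, 1], by norm_num [Matrix.det_fin_two_of]⟩ ∧
      e (PresentedGroup.of 1) =
        ⟨!![0, -1; 1, 0], by norm_num [Matrix.det_fin_two_of]⟩ := by
  refine ⟨MulEquiv.ofBijective _ SL2ZPresentation.toSL_bijective, ?_, ?_⟩
  all_goals
    refine (SL2ZPresentation.toSL_of _).trans ?_
    ext i j
    fin_cases i <;> fin_cases j <;> rfl
end

section
/- For every positive integer N, the index of the principal congruence subgroup Γ(N) in SL(2,ℤ) equals N³ ∏_{p | N} (1 − 1/p²), the product running over the prime divisors p of N; equivalently, [SL(2,ℤ) : Γ(N)] · ∏_{p | N} p² = N³ · ∏_{p | N} (p² − 1). -/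
/-!
Reduction modulo `N` maps `SL(2, ℤ)` onto `SL(2, ℤ/N)` with kernel `Γ(N)`, so the index is
`|SL(2, ℤ/N)|`. For surjectivity, the bottom row `(c, d)` of a matrix over `ℤ/N` lifts to a
coprime integer row (add to `d` a multiple of `N` divisible exactly by the primes of `c` not
dividing `d`); that row completes to a matrix of `SL(2, ℤ)`, and the top row is corrected by an
upper unitriangular factor.

By the Chinese remainder theorem `|SL(2, ℤ/N)|` is multiplicative in `N`. Over any finite
commutative ring `R`, the completions of a unimodular row form a torsor under `R`, so
`|SL(2, R)| = |R| · #{unimodular rows}`. In `ℤ/p^k` a row fails to be unimodular exactly when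
both entries vanish mod `p`, which leaves `p^(2k) - p^(2k-2)` unimodular rows and
`|SL(2, ℤ/p^k)| = p^(3k) (1 - 1/p²)`.
-/

open Matrix MatrixGroups

namespace Matrix.SpecialLinearGroup

variable {n : Type*} [Fintype n] [DecidableEq n] {R S : Type*} [CommRing R] [CommRing S]

def mapEquiv (e : R ≃+* S) : SpecialLinearGroup n R ≃* SpecialLinearGroup n S :=
  MonoidHom.toMulEquiv (map (e : R →+* S)) (map (e.symm : S →+* R))
    (by ext g i j; simp) (by ext g i j; simp)

theorem det_eq_det_map_fst_det_map_snd (M : Matrix n n (R × S)) :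
    M.det = ((M.map Prod.fst).det, (M.map Prod.snd).det) :=
  Prod.ext ((RingHom.fst R S).map_det M) ((RingHom.snd R S).map_det M)

def prodEquiv :
    SpecialLinearGroup n (R × S) ≃* SpecialLinearGroup n R × SpecialLinearGroup n S where
  toFun g := (map (RingHom.fst R S) g, map (RingHom.snd R S) g)
  invFun g := ⟨Matrix.of fun i j => (g.1 i j, g.2 i j), by
    rw [det_eq_det_map_fst_det_map_snd]; exact Prod.ext g.1.2 g.2.2⟩
  left_inv g := by ext i j <;> rfl
  right_inv g := by ext i j <;> rfl
  map_mul' g h := by simp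

def equivSigmaRows : SL(2, R) ≃ Σ v : R × R, {w : R × R // v.1 * w.2 - v.2 * w.1 = 1} where
  toFun g := ⟨(g 0 0, g 0 1), (g 1 0, g 1 1), by rw [← det_fin_two]; exact g.2⟩
  invFun x := ⟨!![x.1.1, x.1.2; x.2.1.1, x.2.1.2], by rw [det_fin_two_of]; exact x.2.2⟩
  left_inv g := by ext i j; fin_cases i <;> fin_cases j <;> rfl
  right_inv x := rfl

def completionsEquiv {a b c₀ d₀ : R} (h : a * d₀ - b * c₀ = 1) :
    R ≃ {w : R × R // a * w.2 - b * w.1 = 1} where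
  toFun t := ⟨(c₀ + t * a, d₀ + t * b), by linear_combination h⟩
  invFun w := w.1.1 * d₀ - w.1.2 * c₀
  left_inv t := by linear_combination t * h
  right_inv w := by
    obtain ⟨⟨c, d⟩, hw⟩ := w
    ext
    · linear_combination c * h - c₀ * hw
    · linear_combination d * h - d₀ * hw

open Classical in
theorem card_completions (a b : R) :
    Nat.card {w : R × R // a * w.2 - b * w.1 = 1} = if IsCoprime a b then Nat.card R else 0 := by
  split_ifs with hab
  · obtain ⟨u, v, huv⟩ := hab
    exact (Nat.card_congr
      (completionsEquiv (c₀ := -v) (d₀ := u) (by linear_combination huv))).symm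
  · have : IsEmpty {w : R × R // a * w.2 - b * w.1 = 1} :=
      ⟨fun w => hab ⟨w.1.2, -w.1.1, by linear_combination w.2⟩⟩
    exact Nat.card_of_isEmpty

theorem card_SL2_eq_card_isCoprime_mul [Finite R] :
    Nat.card SL(2, R) = Nat.card {v : R × R // IsCoprime v.1 v.2} * Nat.card R := by
  have := Fintype.ofFinite R
  classical
  rw [Nat.card_congr equivSigmaRows, Nat.card_sigma]
  simp only [card_completions]
  rw [Finset.sum_ite, Finset.sum_const, Finset.sum_const_zero, add_zero, smul_eq_mul,
    Nat.card_eq_fintype_card (α := Subtype _), Fintype.card_subtype]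

end Matrix.SpecialLinearGroup

namespace ZMod

theorem card_ker_castHom_mul {m d : ℕ} [NeZero m] (h : d ∣ m) :
    Nat.card (castHom h (ZMod d)).toAddMonoidHom.ker * d = m := by
  have := (castHom h (ZMod d)).toAddMonoidHom.ker.card_mul_index
  rwa [AddSubgroup.index_ker, AddMonoidHom.range_eq_top.mpr (castHom_surjective h),
    AddSubgroup.card_top, Nat.card_zmod, Nat.card_zmod] at this

variable {p k : ℕ} [Fact p.Prime]

theorem isUnit_iff_castHom_ne_zero (hk : k ≠ 0) (a : ZMod (p ^ k)) :
    IsUnit a ↔ castHom (dvd_pow_self p hk) (ZMod p) a ≠ 0 := by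
  rw [← natCast_zmod_val a, isUnit_iff_coprime, Nat.coprime_pow_right_iff (Nat.pos_of_ne_zero hk),
    map_natCast, ne_eq, natCast_eq_zero_iff, Nat.coprime_comm,
    Nat.Prime.coprime_iff_not_dvd Fact.out]

theorem isCoprime_iff_castHom (hk : k ≠ 0) (a b : ZMod (p ^ k)) :
    IsCoprime a b ↔ ¬(castHom (dvd_pow_self p hk) (ZMod p) a = 0 ∧
      castHom (dvd_pow_self p hk) (ZMod p) b = 0) := by
  constructor
  · rintro hab ⟨ha, hb⟩
    exact not_isCoprime_zero_zero (ha ▸ hb ▸ hab.map (castHom (dvd_pow_self p hk) (ZMod p)))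
  · rw [not_and_or, ← ne_eq, ← ne_eq, ← isUnit_iff_castHom_ne_zero hk,
      ← isUnit_iff_castHom_ne_zero hk]
    rintro (ha | hb)
    · exact ⟨_, 0, by simpa only [zero_mul, add_zero] using ha.val_inv_mul⟩
    · exact ⟨0, _, by simpa only [zero_mul, zero_add] using hb.val_inv_mul⟩

theorem card_isCoprime_add_card_ker_sq (hk : k ≠ 0) :
    Nat.card {v : ZMod (p ^ k) × ZMod (p ^ k) // IsCoprime v.1 v.2} +
      Nat.card (castHom (dvd_pow_self p hk) (ZMod p)).toAddMonoidHom.ker ^ 2 = (p ^ k) ^ 2 := by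
  classical
  set K := (castHom (dvd_pow_self p hk) (ZMod p)).toAddMonoidHom.ker
  have hcompl : {v : ZMod (p ^ k) × ZMod (p ^ k) // ¬IsCoprime v.1 v.2} ≃ K × K :=
    (Equiv.subtypeEquivRight fun v => by rw [isCoprime_iff_castHom hk, not_not]; rfl).trans
      (Equiv.subtypeProdEquivProd (p := (· ∈ K)) (q := (· ∈ K)))
  rw [sq, ← Nat.card_prod, ← Nat.card_congr hcompl, ← Nat.card_sum,
    Nat.card_congr (Equiv.sumCompl _), Nat.card_prod, Nat.card_zmod, sq]

end ZMod

open Matrix.SpecialLinearGroup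

theorem card_SL2_zmod_prime_pow_mul {p k : ℕ} [Fact p.Prime] (hk : k ≠ 0) :
    Nat.card SL(2, ZMod (p ^ k)) * p ^ 2 = p ^ (3 * k) * (p ^ 2 - 1) := by
  have : NeZero (p ^ k) := ⟨pow_ne_zero k (Fact.out : p.Prime).ne_zero⟩
  have hrows := ZMod.card_isCoprime_add_card_ker_sq (p := p) hk
  have hker := ZMod.card_ker_castHom_mul (dvd_pow_self p hk)
  set U := Nat.card {v : ZMod (p ^ k) × ZMod (p ^ k) // IsCoprime v.1 v.2}
  set c := Nat.card (ZMod.castHom (dvd_pow_self p hk) (ZMod p)).toAddMonoidHom.ker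
  have hU : U * p ^ 2 = (p ^ k) ^ 2 * (p ^ 2 - 1) := by
    have h : U * p ^ 2 + (p ^ k) ^ 2 = (p ^ k) ^ 2 * p ^ 2 :=
      calc U * p ^ 2 + (p ^ k) ^ 2 = (U + c ^ 2) * p ^ 2 := by rw [← hker]; ring
        _ = (p ^ k) ^ 2 * p ^ 2 := by rw [hrows]
    rw [Nat.mul_sub_one]
    omega
  rw [card_SL2_eq_card_isCoprime_mul, Nat.card_zmod, mul_right_comm, hU]
  ring

theorem card_SL_zmod_mul {n : Type*} [Fintype n] [DecidableEq n] {a b : ℕ} (h : a.Coprime b) :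
    Nat.card (SpecialLinearGroup n (ZMod (a * b))) =
      Nat.card (SpecialLinearGroup n (ZMod a)) * Nat.card (SpecialLinearGroup n (ZMod b)) := by
  rw [Nat.card_congr ((mapEquiv (ZMod.chineseRemainder h)).trans prodEquiv).toEquiv, Nat.card_prod]

theorem card_SL_zmod_one {n : Type*} [Fintype n] [DecidableEq n] :
    Nat.card (SpecialLinearGroup n (ZMod 1)) = 1 :=
  have : Subsingleton (SpecialLinearGroup n (ZMod 1)) :=
    ⟨fun _ _ => Subtype.ext (Subsingleton.elim _ _)⟩
  Nat.card_of_subsingleton 1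

theorem card_SL2_zmod_mul_prod {N : ℕ} (hN : N ≠ 0) :
    Nat.card SL(2, ZMod N) * ∏ p ∈ N.primeFactors, p ^ 2 =
      N ^ 3 * ∏ p ∈ N.primeFactors, (p ^ 2 - 1) := by
  have hmul := Nat.multiplicative_factorization (fun n => Nat.card SL(2, ZMod n))
    (fun _ _ => card_SL_zmod_mul) card_SL_zmod_one hN
  have hcube : N ^ 3 = ∏ p ∈ N.primeFactors, p ^ (3 * N.factorization p) := by
    conv_lhs => rw [Nat.prod_primeFactors_pow_factorization hN]
    rw [← Finset.prod_pow]
    exact Finset.prod_congr rfl fun p _ => by rw [← pow_mul, mul_comm]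
  rw [hmul, Nat.prod_factorization_eq_prod_primeFactors, ← Finset.prod_mul_distrib, hcube,
    ← Finset.prod_mul_distrib]
  refine Finset.prod_congr rfl fun p hp => ?_
  have : Fact p.Prime := ⟨Nat.prime_of_mem_primeFactors hp⟩
  exact card_SL2_zmod_prime_pow_mul (Finsupp.mem_support_iff.mp hp)

theorem Nat.exists_coprime_add_mul {c d n : ℕ} (hc : c ≠ 0) (h : Nat.Coprime (c.gcd d) n) :
    ∃ k, Nat.Coprime c (d + k * n) := by
  set S := {q ∈ c.primeFactors | ¬q ∣ d}
  refine ⟨∏ q ∈ S, q, Nat.coprime_of_dvd fun p hp hpc hpsum => ?_⟩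
  by_cases hpd : p ∣ d
  · rcases hp.dvd_mul.mp ((Nat.dvd_add_right hpd).mp hpsum) with hpt | hpn
    · obtain ⟨q, hq, hpq⟩ := (hp.prime.dvd_finsetProd_iff id).mp hpt
      rw [Finset.mem_filter, Nat.mem_primeFactors] at hq
      exact hq.2 ((Nat.prime_dvd_prime_iff_eq hp hq.1.1).mp hpq ▸ hpd)
    · exact Nat.Prime.not_coprime_iff_dvd.mpr ⟨p, hp, Nat.dvd_gcd hpc hpd, hpn⟩ h
  · have hpt : p ∣ ∏ q ∈ S, q :=
      Finset.dvd_prod_of_mem id <|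
        Finset.mem_filter.mpr ⟨Nat.mem_primeFactors.mpr ⟨hp, hpc, hc⟩, hpd⟩
    exact hpd ((Nat.dvd_add_left (hpt.mul_right n)).mp hpsum)

theorem ZMod.exists_isCoprime_intCast_eq {N : ℕ} [NeZero N] {c d : ZMod N} (h : IsCoprime c d) :
    ∃ c' d' : ℤ, IsCoprime c' d' ∧ (c' : ZMod N) = c ∧ (d' : ZMod N) = d := by
  have hgcd : Nat.Coprime ((c.val + N).gcd d.val) N := by
    refine Nat.coprime_of_dvd fun p hp hpcd hpN => ?_
    have : Fact p.Prime := ⟨hp⟩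
    have hπ : ∀ x : ZMod N, p ∣ x.val → castHom hpN (ZMod p) x = 0 := fun x hx => by
      rw [castHom_apply, cast_eq_val, natCast_eq_zero_iff]; exact hx
    have := h.map (castHom hpN (ZMod p))
    rw [hπ c ((Nat.dvd_add_left hpN).mp (hpcd.trans (Nat.gcd_dvd_left _ _))),
      hπ d (hpcd.trans (Nat.gcd_dvd_right _ _))] at this
    exact not_isCoprime_zero_zero this
  -- adding `N` keeps the lift of `c` nonzero, so that it has finitely many prime factors
  obtain ⟨k, hk⟩ := Nat.exists_coprime_add_mul (by have := NeZero.pos N; omega) hgcd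
  exact ⟨(c.val + N : ℕ), (d.val + k * N : ℕ), Nat.isCoprime_iff_coprime.mpr hk,
    by simp, by simp⟩

theorem SL2_reduction_surjective (N : ℕ) [NeZero N] :
    Function.Surjective
      (SpecialLinearGroup.map (Int.castRingHom (ZMod N)) : SL(2, ℤ) →* SL(2, ZMod N)) := by
  intro g
  have hdet : g 0 0 * g 1 1 - g 0 1 * g 1 0 = 1 := by rw [← det_fin_two]; exact g.2
  obtain ⟨c, d, ⟨u, v, huv⟩, hc, hd⟩ :=
    ZMod.exists_isCoprime_intCast_eq (c := g 1 0) (d := g 1 1)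
      ⟨-g 0 1, g 0 0, by linear_combination hdet⟩
  -- `(v, -u)` completes the lifted bottom row; `g` is `!![1, s; 0, 1]` times the reduction of
  -- that completion
  obtain ⟨s, hs⟩ := ZMod.intCast_surjective (g 0 1 * (v : ZMod N) + g 0 0 * (u : ZMod N))
  have huv' : (u : ZMod N) * g 1 0 + v * g 1 1 = 1 := by
    rw [← hc, ← hd]; exact_mod_cast congrArg (Int.cast : ℤ → ZMod N) huv
  let A : SL(2, ℤ) := ⟨!![v + s * c, -u + s * d; c, d], by
    rw [det_fin_two_of]; linear_combination huv⟩
  refine ⟨A, Matrix.SpecialLinearGroup.ext _ _ fun i j => ?_⟩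
  fin_cases i <;> fin_cases j
  · show ((v + s * c : ℤ) : ZMod N) = g 0 0
    push_cast [hs, hc]
    linear_combination (-(v : ZMod N)) * hdet + g 0 0 * huv'
  · show ((-u + s * d : ℤ) : ZMod N) = g 0 1
    push_cast [hs, hd]
    linear_combination (u : ZMod N) * hdet + g 0 1 * huv'
  · exact hc
  · exact hd

theorem CongruenceSubgroup.Gamma_index_eq_card (N : ℕ) [NeZero N] :
    (CongruenceSubgroup.Gamma N).index = Nat.card SL(2, ZMod N) := by
  rw [CongruenceSubgroup.Gamma, Subgroup.index_ker,
    MonoidHom.range_eq_top.mpr (SL2_reduction_surjective N), Subgroup.card_top]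

/-- [SL(2,ℤ) : Γ(N)] = N³ ∏_{p ∣ N} (1 − 1/p²), stated as
[SL(2,ℤ) : Γ(N)] · ∏_{p ∣ N} p² = N³ · ∏_{p ∣ N} (p² − 1). -/
theorem gamma_index (N : ℕ) (hN : 0 < N) :
    (CongruenceSubgroup.Gamma N).index * ∏ p ∈ N.primeFactors, p ^ 2 =
      N ^ 3 * ∏ p ∈ N.primeFactors, (p ^ 2 - 1) := by
  have : NeZero N := ⟨hN.ne'⟩
  rw [CongruenceSubgroup.Gamma_index_eq_card]
  exact card_SL2_zmod_mul_prod hN.ne'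
end

section
/- If a matrix A ∈ SL(2,ℤ) fixes some point τ of the upper half plane ℍ (i.e. A•τ = τ), then A has finite order in SL(2,ℤ). -/
/-!
A non-central `A ∈ SL(2,ℤ)` with a fixed point in `ℍ` is elliptic as a real matrix, so
`tr A ^ 2 < 4` and hence `tr A ∈ {-1, 0, 1}`. Its characteristic polynomial `X² - (tr A) X + 1`
is then `X² + X + 1`, `X² + 1` or `X² - X + 1`, each dividing `X¹² - 1`, and Cayley–Hamilton
gives `A ^ 12 = 1`. A central element is `±1`.
-/

open Matrix MatrixGroups Polynomial

theorem Subgroup.mem_center_of_map_mem_center {G H : Type*} [Group G] [Group H] {f : G →* H}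
    (hf : Function.Injective f) {x : G} (hx : f x ∈ center H) : x ∈ center G :=
  mem_center_iff.mpr fun g ↦ hf <| by simp only [map_mul, mem_center_iff.mp hx (f g)]

namespace Matrix

theorem pow_eq_one_of_charpoly_dvd {R n : Type*} [CommRing R] [Fintype n] [DecidableEq n]
    {M : Matrix n n R} {k : ℕ} (h : M.charpoly ∣ X ^ k - 1) : M ^ k = 1 := by
  obtain ⟨q, hq⟩ := h
  have := congrArg (aeval M) hq
  rw [map_mul, aeval_self_charpoly, zero_mul, map_sub, map_pow, aeval_X, map_one] at this
  exact sub_eq_zero.mp this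

theorem discr_map_fin_two {R S : Type*} [CommRing R] [CommRing S] (f : R →+* S)
    (M : Matrix (Fin 2) (Fin 2) R) : (M.map f).discr = f M.discr := by
  rw [discr_fin_two, discr_fin_two, ← AddMonoidHom.map_trace, ← RingHom.mapMatrix_apply,
    ← RingHom.map_det, map_sub, map_mul, map_pow, map_ofNat]

theorem isElliptic_map_iff {R S : Type*} [CommRing R] [CommRing S] [LinearOrder R] [Preorder S]
    {f : R →+* S} (hf : StrictMono f) {M : Matrix (Fin 2) (Fin 2) R} :
    (M.map f).IsElliptic ↔ M.IsElliptic := by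
  rw [IsElliptic, IsElliptic, discr_map_fin_two, ← map_zero f, hf.lt_iff_lt]

theorem charpoly_dvd_X_pow_twelve_sub_one {M : Matrix (Fin 2) (Fin 2) ℤ} (hdet : M.det = 1)
    (hM : M.IsElliptic) : M.charpoly ∣ X ^ 12 - 1 := by
  rw [IsElliptic, discr_fin_two, hdet] at hM
  have htrace : M.trace = -1 ∨ M.trace = 0 ∨ M.trace = 1 := by
    have := abs_lt_of_sq_lt_sq' (show M.trace ^ 2 < 2 ^ 2 by linarith) (by norm_num)
    omega
  rw [charpoly_fin_two, hdet]
  rcases htrace with htrace | htrace | htrace <;> rw [htrace]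
  · exact ⟨(X - 1) * (X ^ 9 + X ^ 6 + X ^ 3 + 1), by simp only [map_neg, map_one]; ring⟩
  · exact ⟨X ^ 10 - X ^ 8 + X ^ 6 - X ^ 4 + X ^ 2 - 1, by simp only [map_zero, map_one]; ring⟩
  · exact ⟨(X + 1) * (X ^ 9 - X ^ 6 + X ^ 3 - 1), by simp only [map_one]; ring⟩

namespace SpecialLinearGroup

theorem pow_card_eq_one_of_mem_center {n R : Type*} [Fintype n] [DecidableEq n] [CommRing R]
    {A : SpecialLinearGroup n R} (hA : A ∈ Subgroup.center _) : A ^ Fintype.card n = 1 := by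
  obtain ⟨r, hr, hrA⟩ := mem_center_iff.mp hA
  apply Subtype.ext
  rw [coe_pow, ← hrA, ← map_pow, hr, coe_one, map_one]

theorem pow_twelve_eq_one_of_isElliptic {A : SL(2, ℤ)}
    (hA : (A : Matrix (Fin 2) (Fin 2) ℤ).IsElliptic) : A ^ 12 = 1 :=
  Subtype.ext <| by
    rw [coe_pow, coe_one]
    exact pow_eq_one_of_charpoly_dvd (charpoly_dvd_X_pow_twelve_sub_one A.2 hA)

end SpecialLinearGroup

end Matrix

/-- If A ∈ SL(2,ℤ) fixes a point of the upper half plane, then A has finite order. -/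
theorem fixed_point_finite_order (A : SL(2, ℤ)) (τ : UpperHalfPlane)
    (hfix : A • τ = τ) : IsOfFinOrder A := by
  by_cases hA : A ∈ Subgroup.center SL(2, ℤ)
  · exact isOfFinOrder_iff_pow_eq_one.mpr
      ⟨_, Fintype.card_pos, SpecialLinearGroup.pow_card_eq_one_of_mem_center hA⟩
  have hdet : 0 < (SpecialLinearGroup.mapGL ℝ A).val.det := by
    rw [← GeneralLinearGroup.val_det_apply, SpecialLinearGroup.det_mapGL, Units.val_one]
    exact one_pos
  have hell : (SpecialLinearGroup.mapGL ℝ A).IsElliptic :=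
    UpperHalfPlane.isElliptic_of_exists_smul_eq_self hdet
      (fun h ↦ hA (Subgroup.mem_center_of_map_mem_center SpecialLinearGroup.mapGL_injective h))
      ⟨τ, hfix⟩ -- `SL(2, ℤ)` acts on `ℍ` through `mapGL ℝ`
  replace hell : ((A : Matrix (Fin 2) (Fin 2) ℤ).map (algebraMap ℤ ℝ)).IsElliptic := hell
  exact isOfFinOrder_iff_pow_eq_one.mpr ⟨12, by norm_num,
    SpecialLinearGroup.pow_twelve_eq_one_of_isElliptic <|
      (isElliptic_map_iff Int.cast_strictMono).mp hell⟩
end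

section
/- For every positive integer N, the group SL(2,ℤ/N) acts transitively on the set of cyclic subgroups of order N of (ℤ/N)²: if H₁ and H₂ are additive subgroups of (ℤ/N)², each generated by a single element and each of cardinality N, then there exists A ∈ SL(2,ℤ/N) whose action on (ℤ/N)² maps H₁ onto H₂. -/
/-!
The ideal of `ℤ/N` spanned by the coordinates of a vector `v` is principal, generated by a common
divisor `c` of the coordinates. The additive order of `v` divides that of `c`, so if `v` has order
`N` then so does `c`, which forces `c` to be a unit: `v` has coprime coordinates. Such a vector is
the first column of a matrix in `SL(2, ℤ/N)`, so `SL(2, ℤ/N)` acts transitively on generators of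
cyclic subgroups of order `N`, hence on these subgroups.
-/

open Matrix MatrixGroups

instance ZMod.instIsBezout (N : ℕ) : IsBezout (ZMod N) :=
  Function.Surjective.isBezout (Int.castRingHom (ZMod N)) ZMod.intCast_surjective

theorem IsBezout.isCoprime_of_isUnit_gcd {R : Type*} [CommRing R] [IsBezout R] {x y : R}
    (h : IsUnit (IsBezout.gcd x y)) : IsCoprime x y := by
  rwa [IsCoprime, ← Ideal.mem_span_pair, ← IsBezout.span_gcd, ← Ideal.eq_top_iff_one,
    Ideal.span_singleton_eq_top]

theorem addOrderOf_dvd_addOrderOf_of_forall_dvd {ι R : Type*} [NonUnitalSemiring R] {c : R}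
    {v : ι → R} (h : ∀ i, c ∣ v i) : addOrderOf v ∣ addOrderOf c := by
  refine addOrderOf_dvd_of_nsmul_eq_zero (funext fun i => ?_)
  obtain ⟨w, hw⟩ := h i
  rw [Pi.smul_apply, hw, ← smul_mul_assoc, addOrderOf_nsmul_eq_zero, zero_mul, Pi.zero_apply]

theorem Matrix.image_mulVec_zmultiples {m n R : Type*} [Fintype n] [Ring R] (A : Matrix m n R)
    (v : n → R) :
    (A *ᵥ ·) '' (AddSubgroup.zmultiples v : Set (n → R)) = AddSubgroup.zmultiples (A *ᵥ v) :=
  congrArg SetLike.coe ((AddMonoidHom.mk' (A *ᵥ ·) (mulVec_add A)).map_zmultiples v)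

namespace ZMod

variable {N : ℕ} [NeZero N]

theorem isUnit_of_addOrderOf_eq {c : ZMod N} (h : addOrderOf c = N) : IsUnit c := by
  rw [← natCast_zmod_val c, addOrderOf_coe _ (NeZero.ne N), Nat.div_eq_self] at h
  rw [← natCast_zmod_val c, isUnit_iff_coprime]
  exact Nat.Coprime.symm (h.resolve_left (NeZero.ne N))

theorem isCoprime_of_addOrderOf_eq {v : Fin 2 → ZMod N} (hv : addOrderOf v = N) :
    IsCoprime (v 0) (v 1) := by
  refine IsBezout.isCoprime_of_isUnit_gcd (isUnit_of_addOrderOf_eq (Nat.dvd_antisymm ?_ ?_))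
  · exact (addOrderOf_dvd_natCard _).trans (Nat.card_zmod N).dvd
  · have hdvd : ∀ i, IsBezout.gcd (v 0) (v 1) ∣ v i :=
      Fin.forall_fin_two.2 ⟨IsBezout.gcd_dvd_left _ _, IsBezout.gcd_dvd_right _ _⟩
    exact hv.symm.dvd.trans (addOrderOf_dvd_addOrderOf_of_forall_dvd hdvd)

end ZMod

namespace Matrix.SpecialLinearGroup

variable {R : Type*} [CommRing R]

theorem exists_smul_single_eq {v : Fin 2 → R} (hv : IsCoprime (v 0) (v 1)) :
    ∃ g : SL(2, R), g • Pi.single 0 1 = v := by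
  obtain ⟨g, h₀, h₁⟩ := hv.exists_SL2_col 0
  refine ⟨g, funext fun i => ?_⟩
  fin_cases i <;> simp [SpecialLinearGroup.smul_def, h₀, h₁]

theorem exists_smul_eq_of_isCoprime {v w : Fin 2 → R} (hv : IsCoprime (v 0) (v 1))
    (hw : IsCoprime (w 0) (w 1)) : ∃ g : SL(2, R), g • v = w := by
  obtain ⟨g, rfl⟩ := exists_smul_single_eq hv
  obtain ⟨h, rfl⟩ := exists_smul_single_eq hw
  exact ⟨h * g⁻¹, by rw [mul_smul, inv_smul_smul]⟩

end Matrix.SpecialLinearGroup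

/-- SL(2,ℤ/N) acts transitively on cyclic subgroups of order N of (ℤ/N)². -/
theorem sl2_transitive_on_cyclic_subgroups (N : ℕ) (hN : 0 < N)
    (H₁ H₂ : AddSubgroup (Fin 2 → ZMod N))
    (h₁cyc : ∃ g, H₁ = AddSubgroup.closure {g})
    (h₂cyc : ∃ g, H₂ = AddSubgroup.closure {g})
    (h₁card : Nat.card H₁ = N) (h₂card : Nat.card H₂ = N) :
    ∃ A : Matrix.SpecialLinearGroup (Fin 2) (ZMod N),
      (fun v => (A : Matrix (Fin 2) (Fin 2) (ZMod N)).mulVec v) ''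
          (H₁ : Set (Fin 2 → ZMod N)) = (H₂ : Set (Fin 2 → ZMod N)) := by
  have : NeZero N := ⟨hN.ne'⟩
  obtain ⟨g₁, rfl⟩ := h₁cyc
  obtain ⟨g₂, rfl⟩ := h₂cyc
  simp_rw [← AddSubgroup.zmultiples_eq_closure, Nat.card_zmultiples] at h₁card h₂card ⊢
  obtain ⟨A, rfl⟩ := SpecialLinearGroup.exists_smul_eq_of_isCoprime
    (ZMod.isCoprime_of_addOrderOf_eq h₁card) (ZMod.isCoprime_of_addOrderOf_eq h₂card)
  exact ⟨A, image_mulVec_zmultiples _ g₁⟩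
end

section
/- For a positive integer N, the congruence subgroup Γ₀(N) contains an element of order 4 if and only if the congruence a² ≡ −1 (mod N) has a solution; that is, there exists A ∈ Γ₀(N) with orderOf A = 4 if and only if there exists a ∈ ℤ/N with a² = −1. -/
/-!
An element of order 4 in `SL(2, ℤ)` squares to an involution, and the only involution is `-1`:
`B² = 1` means `B = B⁻¹ = adj B`, which forces `B` to be scalar. For `A = [[a, b], [c, d]]`
the `(0, 0)` entry of `A² = -1` reads `a² + bc = -1`, so `a² ≡ -1 (mod N)` once `N ∣ c`.
Conversely, if `α² ≡ -1 (mod N)` then `[[α, -1], [α² + 1, -α]]` lies in `Γ₀(N)` and squares to `-1`.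
-/

open Matrix MatrixGroups

namespace Matrix.SpecialLinearGroup

variable {R : Type*} [CommRing R]

theorem eq_one_or_eq_neg_one_of_sq_eq_one [NoZeroDivisors R] (h2 : (2 : R) ≠ 0)
    {B : SL(2, R)} (hB : B ^ 2 = 1) : B = 1 ∨ B = -1 := by
  have eq_zero_of_neg_eq (x : R) (hx : -x = x) : x = 0 :=
    (mul_eq_zero.mp (by linear_combination -hx : (2 : R) * x = 0)).resolve_left h2
  have entry (i j : Fin 2) := congrArg (fun g : SL(2, R) => g i j)
    (inv_eq_of_mul_eq_one_right (by rwa [← sq]) : B⁻¹ = B)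
  have hd : B 1 1 = B 0 0 := by simpa [SL2_inv_expl] using entry 0 0
  have hb : B 0 1 = 0 := eq_zero_of_neg_eq _ (by simpa [SL2_inv_expl] using entry 0 1)
  have hc : B 1 0 = 0 := eq_zero_of_neg_eq _ (by simpa [SL2_inv_expl] using entry 1 0)
  have ha : B 0 0 * B 0 0 = 1 := by
    simpa [hb, hc, hd] using (det_fin_two (B : Matrix (Fin 2) (Fin 2) R)).symm
  rcases mul_self_eq_one_iff.mp ha with h | h
  · left; ext i j; fin_cases i <;> fin_cases j <;> simp [h, hb, hc, hd]
  · right; ext i j; fin_cases i <;> fin_cases j <;> simp [h, hb, hc, hd]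

theorem one_ne_neg_one (h2 : (2 : R) ≠ 0) : (1 : SL(2, R)) ≠ -1 := fun h =>
  h2 (by simpa [one_add_one_eq_two] using congrArg (fun g : SL(2, R) => 1 + g 0 0) h)

theorem orderOf_eq_four_iff [NoZeroDivisors R] (h2 : (2 : R) ≠ 0) {A : SL(2, R)} :
    orderOf A = 4 ↔ A ^ 2 = -1 := by
  constructor
  · intro hA
    have hA2 : A ^ 2 ≠ 1 := fun h => by simpa [hA] using orderOf_dvd_of_pow_eq_one h
    refine (eq_one_or_eq_neg_one_of_sq_eq_one h2 ?_).resolve_left hA2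
    rw [← pow_mul, show 2 * 2 = orderOf A from hA.symm, pow_orderOf_eq_one]
  · intro hA
    refine orderOf_eq_prime_pow (p := 2) (n := 1) ?_ ?_
    · simpa [hA] using (one_ne_neg_one h2).symm
    · rw [show 2 ^ (1 + 1) = 2 * 2 from rfl, pow_mul, hA, neg_one_sq]

theorem sq_apply_zero_zero (A : SL(2, R)) : (A ^ 2) 0 0 = A 0 0 ^ 2 + A 0 1 * A 1 0 := by
  simp [sq, mul_apply, Fin.sum_univ_two]

theorem exists_sq_eq_neg_one_apply_one_zero (a : R) :
    ∃ A : SL(2, R), A 1 0 = a ^ 2 + 1 ∧ A ^ 2 = -1 := by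
  let A : SL(2, R) := ⟨!![a, -1; a ^ 2 + 1, -a], by simp [det_fin_two]; ring⟩
  refine ⟨A, rfl, ?_⟩
  ext i j
  rw [sq A, coe_mul]
  fin_cases i <;> fin_cases j <;> simp [A, mul_apply, Fin.sum_univ_two] <;> ring

end Matrix.SpecialLinearGroup

theorem gamma0_order_four_iff_general (N : ℕ) :
    (∃ A ∈ CongruenceSubgroup.Gamma0 N, orderOf A = 4) ↔
      ∃ a : ZMod N, a ^ 2 = -1 := by
  simp only [SpecialLinearGroup.orderOf_eq_four_iff (two_ne_zero : (2 : ℤ) ≠ 0),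
    CongruenceSubgroup.Gamma0_mem]
  constructor
  · rintro ⟨A, hA10, hA⟩
    refine ⟨A 0 0, ?_⟩
    have h00 := congrArg (fun x : ℤ => (x : ZMod N)) (SpecialLinearGroup.sq_apply_zero_zero A)
    simpa [hA, hA10] using h00.symm
  · rintro ⟨a, ha⟩
    obtain ⟨α, rfl⟩ := ZMod.intCast_surjective a
    obtain ⟨A, hA10, hA⟩ := SpecialLinearGroup.exists_sq_eq_neg_one_apply_one_zero α
    exact ⟨A, by push_cast [hA10, ha]; ring, hA⟩

/-- Γ₀(N) contains an element of order 4 iff a² ≡ −1 (mod N) is solvable. -/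
theorem gamma0_order_four_iff (N : ℕ) (hN : 0 < N) :
    (∃ A ∈ CongruenceSubgroup.Gamma0 N, orderOf A = 4) ↔
      ∃ a : ZMod N, a ^ 2 = -1 :=
  gamma0_order_four_iff_general N
end

section
/- Let i ∈ ℂ denote the imaginary unit and let φ be the ℂ-algebra endomorphism of the polynomial ring ℂ[q,s] determined by φ(q) = −iq and φ(s) = −s. Then the subalgebra of φ-invariant polynomials {p ∈ ℂ[q,s] : φ(p) = p} equals the ℂ-subalgebra generated by q⁴, q²s, and s². -/
open MvPolynomial

lemma negI_pow_eq_one_iff (n : ℕ) : (-Complex.I) ^ n = 1 ↔ n % 4 = 0 := by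
  have h4 : (-Complex.I : ℂ) ^ 4 = 1 := by
    simp [pow_succ, Complex.I_mul_I]
  constructor
  · intro h
    have hn : (-Complex.I : ℂ) ^ (n % 4) = 1 := by
      conv at h => rw [← Nat.div_add_mod n 4]
      rw [pow_add, pow_mul, h4, one_pow, one_mul] at h
      exact h
    have hr : n % 4 < 4 := Nat.mod_lt n (by norm_num)
    interval_cases h : n % 4 <;>
      first
      | rfl
      | (norm_num [pow_succ, Complex.ext_iff, Complex.I_mul_I] at hn)
  · intro h
    obtain ⟨k, hk⟩ := Nat.dvd_of_mod_eq_zero h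
    rw [hk, pow_mul, h4, one_pow]
open MvPolynomial

lemma monomial_eq_prod (d : Fin 2 →₀ ℕ) (c : ℂ) :
    (monomial d c : MvPolynomial (Fin 2) ℂ) = C c * X 0 ^ d 0 * X 1 ^ d 1 := by
  have hd : d = Finsupp.single 0 (d 0) + Finsupp.single 1 (d 1) := by
    ext x; fin_cases x <;> simp
  rw [X_pow_eq_monomial, X_pow_eq_monomial, C_apply, monomial_mul, monomial_mul,
    zero_add, mul_one, mul_one, ← hd]

lemma phi_monomial (φ : MvPolynomial (Fin 2) ℂ →ₐ[ℂ] MvPolynomial (Fin 2) ℂ)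
    (hq : φ (X 0) = C (-Complex.I) * X 0) (hs : φ (X 1) = -X 1)
    (d : Fin 2 →₀ ℕ) (c : ℂ) :
    φ (monomial d c) = ((-Complex.I) ^ (d 0 + 2 * d 1)) • monomial d c := by
  have h2 : ((-Complex.I : ℂ)) ^ 2 = -1 := by
    simp [pow_two, Complex.I_mul_I]
  have key : ((-Complex.I) ^ (d 0 + 2 * d 1) : ℂ)
      = (-Complex.I) ^ (d 0) * (-1) ^ (d 1) := by
    rw [pow_add, pow_mul, h2]
  have hC : (C ((-1 : ℂ) ^ (d 1)) : MvPolynomial (Fin 2) ℂ) = (-1) ^ (d 1) := by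
    rw [C_pow, map_neg, map_one]
  rw [monomial_eq_prod, map_mul, map_mul, map_pow, map_pow, hq, hs, algHom_C,
    Algebra.smul_def, algebraMap_eq, key, map_mul, mul_pow, ← C_pow,
    neg_pow (X 1 : MvPolynomial (Fin 2) ℂ), hC]
  ring

lemma mem_adj (a b : ℕ) (h : (a + 2 * b) % 4 = 0) :
    (X 0 : MvPolynomial (Fin 2) ℂ) ^ a * X 1 ^ b ∈
      Algebra.adjoin ℂ ({X 0 ^ 4, X 0 ^ 2 * X 1, X 1 ^ 2} : Set (MvPolynomial (Fin 2) ℂ)) := by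
  have h1 : (X 0 : MvPolynomial (Fin 2) ℂ) ^ 4 ∈ Algebra.adjoin ℂ ({X 0 ^ 4, X 0 ^ 2 * X 1, X 1 ^ 2} : Set (MvPolynomial (Fin 2) ℂ)) := Algebra.subset_adjoin
    (show _ ∈ ({X 0 ^ 4, X 0 ^ 2 * X 1, X 1 ^ 2} : Set (MvPolynomial (Fin 2) ℂ)) by simp)
  have h2 : (X 0 : MvPolynomial (Fin 2) ℂ) ^ 2 * X 1 ∈ Algebra.adjoin ℂ ({X 0 ^ 4, X 0 ^ 2 * X 1, X 1 ^ 2} : Set (MvPolynomial (Fin 2) ℂ)) := Algebra.subset_adjoin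
    (show _ ∈ ({X 0 ^ 4, X 0 ^ 2 * X 1, X 1 ^ 2} : Set (MvPolynomial (Fin 2) ℂ)) by simp)
  have h3 : (X 1 : MvPolynomial (Fin 2) ℂ) ^ 2 ∈ Algebra.adjoin ℂ ({X 0 ^ 4, X 0 ^ 2 * X 1, X 1 ^ 2} : Set (MvPolynomial (Fin 2) ℂ)) := Algebra.subset_adjoin
    (show _ ∈ ({X 0 ^ 4, X 0 ^ 2 * X 1, X 1 ^ 2} : Set (MvPolynomial (Fin 2) ℂ)) by simp)
  obtain ⟨a', rfl⟩ : ∃ a', a = 2 * a' := ⟨a / 2, by omega⟩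
  rcases le_total b a' with hb | hb
  · obtain ⟨t, rfl⟩ : ∃ t, a' = b + 2 * t := ⟨(a' - b) / 2, by omega⟩
    have : (X 0 : MvPolynomial (Fin 2) ℂ) ^ (2 * (b + 2 * t)) * X 1 ^ b
        = (X 0 ^ 2 * X 1) ^ b * (X 0 ^ 4) ^ t := by ring
    rw [this]
    exact mul_mem (pow_mem h2 b) (pow_mem h1 t)
  · obtain ⟨t, rfl⟩ : ∃ t, b = a' + 2 * t := ⟨(b - a') / 2, by omega⟩
    have : (X 0 : MvPolynomial (Fin 2) ℂ) ^ (2 * a') * X 1 ^ (a' + 2 * t)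
        = (X 0 ^ 2 * X 1) ^ a' * (X 1 ^ 2) ^ t := by ring
    rw [this]
    exact mul_mem (pow_mem h2 a') (pow_mem h3 t)

/-- For φ the ℂ-algebra endomorphism of ℂ[q,s] with φ(q) = −iq and φ(s) = −s, the
φ-invariant polynomials form the subalgebra generated by q⁴, q²s, s². -/
theorem order_four_invariants
    (φ : MvPolynomial (Fin 2) ℂ →ₐ[ℂ] MvPolynomial (Fin 2) ℂ)
    (hq : φ (X 0) = C (-Complex.I) * X 0) (hs : φ (X 1) = -X 1) :
    {p : MvPolynomial (Fin 2) ℂ | φ p = p} =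
      (Algebra.adjoin ℂ
        ({X 0 ^ 4, X 0 ^ 2 * X 1, X 1 ^ 2} : Set (MvPolynomial (Fin 2) ℂ)) :
          Subalgebra ℂ (MvPolynomial (Fin 2) ℂ)) := by
  ext p
  simp only [Set.mem_setOf_eq, SetLike.mem_coe]
  constructor
  · intro hp
    -- each monomial of p has a good exponent
    have hcoeff : ∀ d : Fin 2 →₀ ℕ, coeff d (φ p) = (-Complex.I) ^ (d 0 + 2 * d 1) * coeff d p := by
      intro d
      conv_lhs => rw [p.as_sum, map_sum]
      rw [Finset.sum_congr rfl (fun v _ => phi_monomial φ hq hs v (coeff v p))]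
      rw [MvPolynomial.coeff_sum]
      rw [Finset.sum_eq_single d]
      · rw [coeff_smul, coeff_monomial, if_pos rfl, smul_eq_mul]
      · intro v _ hv
        rw [coeff_smul, coeff_monomial, if_neg hv, smul_zero]
      · intro hd
        simp [coeff_smul, coeff_monomial, notMem_support_iff.mp hd]
    rw [p.as_sum]
    apply Subalgebra.sum_mem
    intro d hd
    have hc : coeff d p ≠ 0 := mem_support_iff.mp hd
    have h1 : (-Complex.I) ^ (d 0 + 2 * d 1) = 1 := by
      have h := hcoeff d
      rw [hp] at h
      exact mul_right_cancel₀ hc (h.symm.trans (one_mul _).symm)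
    have hdvd : (d 0 + 2 * d 1) % 4 = 0 := (negI_pow_eq_one_iff _).mp h1
    rw [monomial_eq_prod, mul_assoc]
    exact mul_mem (Subalgebra.algebraMap_mem _ (coeff d p)) (mem_adj _ _ hdvd)
  · intro hp
    have hle : Algebra.adjoin ℂ ({X 0 ^ 4, X 0 ^ 2 * X 1, X 1 ^ 2} : Set (MvPolynomial (Fin 2) ℂ))
        ≤ AlgHom.equalizer φ (AlgHom.id ℂ _) := by
      rw [Algebra.adjoin_le_iff]
      intro x hx
      have h2 : ((-Complex.I : ℂ)) ^ 2 = -1 := by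
        simp [pow_two, Complex.I_mul_I]
      have h4 : ((-Complex.I : ℂ)) ^ 4 = 1 := by
        simp [pow_succ, Complex.I_mul_I]
      simp only [Set.mem_insert_iff, Set.mem_singleton_iff] at hx
      rcases hx with rfl | rfl | rfl <;>
          refine SetLike.mem_coe.mpr ((AlgHom.mem_equalizer _ _ _).mpr ?_) <;>
          rw [AlgHom.id_apply]
      · rw [map_pow, hq, mul_pow, ← C_pow, h4, C_1, one_mul]
      · rw [map_mul, map_pow, hq, hs, mul_pow, ← C_pow, h2, map_neg, map_one]
        ring
      · rw [map_pow, hs, neg_sq]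
    exact hle hp
end
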